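/- arXiv:2110.07866 — 2 statements merged into one kernel-verified Lean document; each statement's English description precedes it below -/
import Mathlib

section
/- Let 1 < p_i, p_j < +∞, let ω_i, ω_j > 0, let F ⊆ ℝ^d be a polytope, and let a, c ∈ ℝ^d with a ∉ F and c ∉ F. Suppose b = (b_1,…,b_d) minimizes the function y ↦ ω_i‖y − a‖_{p_i} + ω_j‖c − y‖_{p_j} over y ∈ F, and let F_b be the face of F such that b ∈ relint(F_b). Then for all points f = (f_1,…,f_d) and g = (g_1,…,g_d) in F_b: ω_i Σ_{k=1}^d (|b_k − a_k|/‖b − a‖_{p_i})^{p_i−1} sign(b_k − a_k)(f_k − g_k) = ω_j Σ_{k=1}^d (|c_k − b_k|/‖c − b‖_{p_j})^{p_j−1} sign(c_k − b_k)(f_k − g_k). -/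
/-!
Moving b along the direction f - g stays inside the face F_b for small times of either sign,
because b lies in its relative interior, and F_b ⊆ F. So t ↦ ω_i‖b + t(f - g) - a‖_{p_i} +
ω_j‖c - b - t(f - g)‖_{p_j} has a local minimum at t = 0. Since b ≠ a and b ≠ c, both ℓ_p norms
are differentiable there, and the stated identity is the vanishing of the derivative.
-/

noncomputable def lpnorm {d : ℕ} (p : ℝ) (x : Fin d → ℝ) : ℝ :=
  (∑ k, |x k| ^ p) ^ (1 / p)

open Filter Topology

lemma abs_rpow_sub_two_mul_self (p y : ℝ) : |y| ^ (p - 2) * y = |y| ^ (p - 1) * Real.sign y := by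
  rcases lt_trichotomy y 0 with hy | rfl | hy
  · rw [Real.sign_of_neg hy, abs_of_neg hy, show p - 1 = p - 2 + 1 by ring,
      Real.rpow_add_one (neg_ne_zero.2 hy.ne)]
    ring
  · simp
  · rw [Real.sign_of_pos hy, abs_of_pos hy, show p - 1 = p - 2 + 1 by ring,
      Real.rpow_add_one hy.ne']
    ring

lemma hasDerivAt_lpnorm_add_smul {d : ℕ} {p : ℝ} (hp : 1 < p) {x : Fin d → ℝ} (hx : x ≠ 0)
    (v : Fin d → ℝ) :
    HasDerivAt (fun t : ℝ => lpnorm p (x + t • v))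
      (∑ k, (|x k| / lpnorm p x) ^ (p - 1) * Real.sign (x k) * v k) 0 := by
  set s := ∑ k, |x k| ^ p
  have hs : 0 < s := by
    obtain ⟨k, hk⟩ := Function.ne_iff.1 hx
    exact Finset.sum_pos' (fun i _ => by positivity)
      ⟨k, Finset.mem_univ k, Real.rpow_pos_of_pos (abs_pos.2 hk) p⟩
  have hsum : HasDerivAt (fun t : ℝ => ∑ k, |(x + t • v) k| ^ p)
      (∑ k, p * |x k| ^ (p - 2) * x k * v k) 0 := by
    refine HasDerivAt.fun_sum fun k _ => ?_
    have hline : HasDerivAt (fun t : ℝ => (x + t • v) k) (v k) 0 := by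
      simpa using ((hasDerivAt_id (0 : ℝ)).mul_const (v k)).const_add (x k)
    exact (hasDerivAt_abs_rpow (x k) hp).comp_of_eq 0 hline (by simp)
  have hnorm := hsum.rpow_const (p := 1 / p) (Or.inl (by simpa using hs.ne'))
  simp only [zero_smul, add_zero] at hnorm
  refine hnorm.congr_deriv ?_
  have hp0 : p ≠ 0 := by linarith
  rw [Finset.sum_mul, Finset.sum_mul]
  refine Finset.sum_congr rfl fun k _ => ?_
  have hscale : (|x k| / lpnorm p x) ^ (p - 1) = |x k| ^ (p - 1) * s ^ (1 / p - 1) := by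
    rw [Real.div_rpow (abs_nonneg _) (by unfold lpnorm; positivity), lpnorm,
      ← Real.rpow_mul hs.le, div_eq_mul_inv, ← Real.rpow_neg hs.le]
    congr 2
    field_simp
    ring
  rw [hscale, mul_assoc p, abs_rpow_sub_two_mul_self]
  field_simp
  rfl

lemma eventually_add_smul_sub_mem_of_mem_intrinsicInterior {E : Type*} [AddCommGroup E]
    [Module ℝ E] [TopologicalSpace E] [ContinuousAdd E] [ContinuousSMul ℝ E] {s : Set E}
    {b f g : E} (hb : b ∈ intrinsicInterior ℝ s) (hf : f ∈ s) (hg : g ∈ s) :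
    ∀ᶠ t : ℝ in 𝓝 0, b + t • (f - g) ∈ s := by
  obtain ⟨b', hb', rfl⟩ := hb
  have hdir : f - g ∈ (affineSpan ℝ s).direction :=
    AffineSubspace.vsub_mem_direction (subset_affineSpan ℝ s hf) (subset_affineSpan ℝ s hg)
  let γ : ℝ → affineSpan ℝ s := fun t =>
    ⟨b' + t • (f - g), by
      simpa [add_comm] using AffineSubspace.vadd_mem_of_mem_direction
        (Submodule.smul_mem _ t hdir) b'.2⟩
  have hγ : Continuous γ := by fun_prop
  have hγ0 : γ 0 = b' := Subtype.ext (by simp [γ])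
  have hpre : γ ⁻¹' interior ((↑) ⁻¹' s) ∈ 𝓝 (0 : ℝ) :=
    (isOpen_interior.preimage hγ).mem_nhds (by rwa [Set.mem_preimage, hγ0])
  filter_upwards [hpre] with t ht
  exact (interior_subset ht : γ t ∈ ((↑) ⁻¹' s : Set (affineSpan ℝ s)))

theorem stmt_1_general {d : ℕ} (pi pj : ℝ) (hpi : 1 < pi) (hpj : 1 < pj)
    (ωi ωj : ℝ)
    (F : Set (Fin d → ℝ))
    (a c : Fin d → ℝ) (ha : a ∉ F) (hc : c ∉ F)
    (b : Fin d → ℝ) (hbF : b ∈ F)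
    (hmin : ∀ y ∈ F, ωi * lpnorm pi (b - a) + ωj * lpnorm pj (c - b) ≤
      ωi * lpnorm pi (y - a) + ωj * lpnorm pj (c - y))
    (Fb : Set (Fin d → ℝ)) (hFbface : IsExtreme ℝ F Fb)
    (hbrel : b ∈ intrinsicInterior ℝ Fb) :
    ∀ f ∈ Fb, ∀ g ∈ Fb,
      ωi * ∑ k, (|b k - a k| / lpnorm pi (b - a)) ^ (pi - 1) * Real.sign (b k - a k) * (f k - g k)
        = ωj * ∑ k, (|c k - b k| / lpnorm pj (c - b)) ^ (pj - 1) * Real.sign (c k - b k) * (f k - g k) := by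
  intro f hf g hg
  have hba : b - a ≠ 0 := sub_ne_zero.2 fun h => ha (h ▸ hbF)
  have hcb : c - b ≠ 0 := sub_ne_zero.2 fun h => hc (h ▸ hbF)
  have hlocal : IsLocalMin (fun t : ℝ => ωi * lpnorm pi (b - a + t • (f - g)) +
      ωj * lpnorm pj (c - b + t • -(f - g))) 0 := by
    filter_upwards [eventually_add_smul_sub_mem_of_mem_intrinsicInterior hbrel hf hg] with t ht
    have hshift : b - a + t • (f - g) = b + t • (f - g) - a := by abel
    have hshift' : c - b + t • -(f - g) = c - (b + t • (f - g)) := by rw [smul_neg]; abel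
    simpa only [zero_smul, add_zero, hshift, hshift'] using hmin _ (hFbface.subset ht)
  have hderiv := ((hasDerivAt_lpnorm_add_smul hpi hba (f - g)).const_mul ωi).add
    ((hasDerivAt_lpnorm_add_smul hpj hcb (-(f - g))).const_mul ωj)
  have hcrit := hlocal.hasDerivAt_eq_zero hderiv
  simp only [Pi.sub_apply, Pi.neg_apply, mul_neg, Finset.sum_neg_distrib] at hcrit
  linarith

/-- Local optimality criterion for gate points. -/
theorem stmt_1 {d : ℕ} (pi pj : ℝ) (hpi : 1 < pi) (hpj : 1 < pj)
    (ωi ωj : ℝ) (hωi : 0 < ωi) (hωj : 0 < ωj)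
    (S : Finset (Fin d → ℝ)) (F : Set (Fin d → ℝ))
    (hF : F = convexHull ℝ (S : Set (Fin d → ℝ)))
    (a c : Fin d → ℝ) (ha : a ∉ F) (hc : c ∉ F)
    (b : Fin d → ℝ) (hbF : b ∈ F)
    (hmin : ∀ y ∈ F, ωi * lpnorm pi (b - a) + ωj * lpnorm pj (c - b) ≤
      ωi * lpnorm pi (y - a) + ωj * lpnorm pj (c - y))
    (Fb : Set (Fin d → ℝ)) (hFbconv : Convex ℝ Fb) (hFbface : IsExtreme ℝ F Fb)
    (hbrel : b ∈ intrinsicInterior ℝ Fb) :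
    ∀ f ∈ Fb, ∀ g ∈ Fb,
      ωi * ∑ k, (|b k - a k| / lpnorm pi (b - a)) ^ (pi - 1) * Real.sign (b k - a k) * (f k - g k)
        = ωj * ∑ k, (|c k - b k| / lpnorm pj (c - b)) ^ (pj - 1) * Real.sign (c k - b k) * (f k - g k) :=
  stmt_1_general pi pj hpi hpj ωi ωj F a c ha hc b hbF hmin Fb hFbface hbrel
end

section
/- (Snell's law.) Let α ∈ ℝ² be nonzero and β ∈ ℝ, and set F = {x ∈ ℝ² : α·x = β}. Let ω_s, ω_t > 0, let a ∈ ℝ² with α·a < β and c ∈ ℝ² with α·c > β, and suppose b minimizes y ↦ ω_s‖y − a‖₂ + ω_t‖c − y‖₂ over y ∈ F. Then for every nonzero vector v ∈ ℝ² orthogonal to L(F) (equivalently, v is a nonzero scalar multiple of α): ω_s sin θ_s = ω_t sin θ_t, where θ_s ∈ [0,π] is the angle between b − a and v and θ_t ∈ [0,π] is the angle between c − b and v. -/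
/-!
At a minimiser `b` on the line `F`, the directional derivative of
`y ↦ ωs ‖y - a‖ + ωt ‖c - y‖` along the direction `u` of `F` vanishes:
`ωs ⟪b - a, u⟫ / ‖b - a‖ = ωt ⟪c - b, u⟫ / ‖c - b‖`.
In the plane `u` may be taken to be the rotation `J v` of the normal `v` by a right angle,
and then `|⟪w, J v⟫| = sin (angle w v) ‖w‖ ‖v‖`, which turns the stationarity condition into
Snell's law.
-/

open scoped RealInnerProductSpace
open InnerProductGeometry

section Stationarity

variable {E : Type*} [NormedAddCommGroup E] [InnerProductSpace ℝ E]

theorem hasDerivAt_norm_add_smul {x : E} (hx : x ≠ 0) (u : E) :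
    HasDerivAt (fun t : ℝ => ‖x + t • u‖) (⟪x, u⟫ / ‖x‖) 0 := by
  have hsq : HasDerivAt (fun t : ℝ => ‖x + t • u‖ ^ 2) (2 * ⟪x, u⟫) 0 := by
    simpa using (((hasDerivAt_id (0 : ℝ)).smul_const u).const_add x).norm_sq
  have hx' : ‖x + (0 : ℝ) • u‖ ^ 2 ≠ 0 := by simpa using hx
  convert hsq.sqrt hx' using 1
  · simp only [Real.sqrt_sq (norm_nonneg _)]
  · simp only [zero_smul, add_zero, Real.sqrt_sq (norm_nonneg _)]
    field_simp

theorem inner_div_norm_eq_of_forall_le_line {a b c u : E} {ωs ωt : ℝ} (hba : b ≠ a) (hcb : c ≠ b)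
    (hmin : ∀ t : ℝ,
      ωs * ‖b - a‖ + ωt * ‖c - b‖ ≤ ωs * ‖b + t • u - a‖ + ωt * ‖c - (b + t • u)‖) :
    ωs * (⟪b - a, u⟫ / ‖b - a‖) = ωt * (⟪c - b, u⟫ / ‖c - b‖) := by
  have hderiv : HasDerivAt (fun t : ℝ => ωs * ‖(b - a) + t • u‖ + ωt * ‖(c - b) + t • -u‖)
      (ωs * (⟪b - a, u⟫ / ‖b - a‖) + ωt * (⟪c - b, -u⟫ / ‖c - b‖)) 0 :=
    ((hasDerivAt_norm_add_smul (sub_ne_zero.2 hba) u).const_mul ωs).add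
      ((hasDerivAt_norm_add_smul (sub_ne_zero.2 hcb) (-u)).const_mul ωt)
  have hloc : IsLocalMin (fun t : ℝ => ωs * ‖(b - a) + t • u‖ + ωt * ‖(c - b) + t • -u‖) 0 := by
    refine Filter.Eventually.of_forall fun t => ?_
    have h := hmin t
    rw [show b + t • u - a = (b - a) + t • u by abel,
      show c - (b + t • u) = (c - b) + t • -u by rw [smul_neg]; abel] at h
    simpa using h
  have h0 := hloc.hasDerivAt_eq_zero hderiv
  rw [inner_neg_right, neg_div] at h0
  linarith

end Stationarity

namespace Orientation

variable {E : Type*} [NormedAddCommGroup E] [InnerProductSpace ℝ E]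
  [Fact (Module.finrank ℝ E = 2)] (o : Orientation ℝ E (Fin 2))

theorem sin_angle_mul_norm_mul_norm_eq_abs_inner_rightAngleRotation (x y : E) :
    Real.sin (angle x y) * (‖x‖ * ‖y‖) = |⟪x, o.rightAngleRotation y⟫| := by
  have hpyth := o.inner_sq_add_areaForm_sq x y
  rw [sin_angle_mul_norm_mul_norm, real_inner_self_eq_norm_sq, real_inner_self_eq_norm_sq,
    o.inner_rightAngleRotation_right, abs_neg, ← Real.sqrt_sq_eq_abs]
  congr 1
  linarith

theorem sin_angle_eq_abs_inner_rightAngleRotation_div {x y : E} (hx : x ≠ 0) (hy : y ≠ 0) :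
    Real.sin (angle x y) = |⟪x, o.rightAngleRotation y⟫| / (‖x‖ * ‖y‖) := by
  rw [← o.sin_angle_mul_norm_mul_norm_eq_abs_inner_rightAngleRotation]
  field_simp

end Orientation

theorem stmt_2_general (α : EuclideanSpace ℝ (Fin 2)) (β : ℝ)
    (F : Set (EuclideanSpace ℝ (Fin 2))) (hF : F = {x | ⟪α, x⟫ = β})
    (ωs ωt : ℝ) (hωs : 0 < ωs) (hωt : 0 < ωt)
    (a c : EuclideanSpace ℝ (Fin 2)) (ha : ⟪α, a⟫ < β) (hc : β < ⟪α, c⟫)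
    (b : EuclideanSpace ℝ (Fin 2)) (hbF : b ∈ F)
    (hmin : ∀ y ∈ F, ωs * ‖b - a‖ + ωt * ‖c - b‖ ≤ ωs * ‖y - a‖ + ωt * ‖c - y‖)
    (v : EuclideanSpace ℝ (Fin 2)) (hv : v ≠ 0)
    (hvperp : ∀ x ∈ F, ∀ x' ∈ F, ⟪v, x - x'⟫ = 0) :
    ωs * Real.sin (InnerProductGeometry.angle (b - a) v)
      = ωt * Real.sin (InnerProductGeometry.angle (c - b) v) := by
  subst hF
  have : Fact (Module.finrank ℝ (EuclideanSpace ℝ (Fin 2)) = 2) := ⟨finrank_euclideanSpace_fin⟩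
  let o : Orientation ℝ (EuclideanSpace ℝ (Fin 2)) (Fin 2) :=
    (EuclideanSpace.basisFun (Fin 2) ℝ).toBasis.orientation
  have hb : ⟪α, b⟫ = β := hbF
  -- `J α` is a direction of `F`, so `v ⊥ J α`; in the plane this makes `J v` a direction of `F`.
  have hvJα : ⟪v, o.rightAngleRotation α⟫ = 0 := by
    simpa using hvperp (b + o.rightAngleRotation α) (by simp [inner_add_right, hb]) b hb
  have hαJv : ⟪α, o.rightAngleRotation v⟫ = 0 := by
    rw [o.inner_rightAngleRotation_swap, real_inner_comm, hvJα, neg_zero]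
  have hba : b ≠ a := by rintro rfl; linarith
  have hcb : c ≠ b := by rintro rfl; linarith
  have hstat := inner_div_norm_eq_of_forall_le_line (u := o.rightAngleRotation v) hba hcb
    fun t => hmin _ (by simp [inner_add_right, inner_smul_right, hb, hαJv])
  have habs := congrArg abs hstat
  simp only [abs_mul, abs_div, abs_norm, abs_of_pos hωs, abs_of_pos hωt] at habs
  rw [o.sin_angle_eq_abs_inner_rightAngleRotation_div (sub_ne_zero.2 hba) hv,
    o.sin_angle_eq_abs_inner_rightAngleRotation_div (sub_ne_zero.2 hcb) hv]
  linear_combination habs / ‖v‖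

/-- Snell's law. -/
theorem stmt_2 (α : EuclideanSpace ℝ (Fin 2)) (hα : α ≠ 0) (β : ℝ)
    (F : Set (EuclideanSpace ℝ (Fin 2))) (hF : F = {x | ⟪α, x⟫ = β})
    (ωs ωt : ℝ) (hωs : 0 < ωs) (hωt : 0 < ωt)
    (a c : EuclideanSpace ℝ (Fin 2)) (ha : ⟪α, a⟫ < β) (hc : β < ⟪α, c⟫)
    (b : EuclideanSpace ℝ (Fin 2)) (hbF : b ∈ F)
    (hmin : ∀ y ∈ F, ωs * ‖b - a‖ + ωt * ‖c - b‖ ≤ ωs * ‖y - a‖ + ωt * ‖c - y‖)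
    (v : EuclideanSpace ℝ (Fin 2)) (hv : v ≠ 0)
    (hvperp : ∀ x ∈ F, ∀ x' ∈ F, ⟪v, x - x'⟫ = 0) :
    ωs * Real.sin (InnerProductGeometry.angle (b - a) v)
      = ωt * Real.sin (InnerProductGeometry.angle (c - b) v) :=
  stmt_2_general α β F hF ωs ωt hωs hωt a c ha hc b hbF hmin v hv hvperp
end
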